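/- arXiv:2307.12739 — 2 statements merged into one kernel-verified Lean document; each statement's English description precedes it below -/
import Mathlib

section
/- On ℂ* with the dual metric g* determined by g*(dz,dz) = g*(dz̄,dz̄) = z z̄ and g*(dz,dz̄) = g*(dz̄,dz) = 0, and Poisson bivector π = π₁₁ ∂z ∧ ∂z̄ with π₁₁ smooth and nowhere zero, the Levi-Civita contravariant connection D of (π, g*) satisfies Dπ = 0 if and only if π₁₁²/z − (1/2) ∂(π₁₁²)/∂z = 0 and π₁₁²/z̄ − (1/2) ∂(π₁₁²)/∂z̄ = 0. -/
open Complex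

/-- Wirtinger derivative `∂f/∂z` for `f : ℂ → ℂ`. -/
noncomputable def wirt1 (f : ℂ → ℂ) (z : ℂ) : ℂ :=
  (fderiv ℝ f z 1 - Complex.I * fderiv ℝ f z Complex.I) / 2

/-- Conjugate Wirtinger derivative `∂f/∂z̄` for `f : ℂ → ℂ`. -/
noncomputable def wirtBar1 (f : ℂ → ℂ) (z : ℂ) : ℂ :=
  (fderiv ℝ f z 1 + Complex.I * fderiv ℝ f z Complex.I) / 2

/-- The cometric `g*` on `ℂ*` in the coframe `(dz, dz̄)`:
`g*(dz,dz) = g*(dz̄,dz̄) = z z̄` and `g*(dz,dz̄) = g*(dz̄,dz) = 0`. -/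
noncomputable def Gco : Fin 2 → Fin 2 → ℂ → ℂ :=
  fun a b z => if a = b then z * (starRingEnd ℂ) z else 0

/-- The Poisson bivector `π = π₁₁ ∂z ∧ ∂z̄` in the coframe `(dz, dz̄)`:
`π(dz,dz̄) = π₁₁`, `π(dz̄,dz) = -π₁₁`, diagonal entries zero. -/
noncomputable def Pco (p : ℂ → ℂ) : Fin 2 → Fin 2 → ℂ → ℂ :=
  fun a b z => if a = 0 ∧ b = 1 then p z else if a = 1 ∧ b = 0 then - p z else 0

/-- The anchor `π_#` on basis covectors, acting on functions:
`π_#(dz) = π₁₁ ∂/∂z̄` and `π_#(dz̄) = -π₁₁ ∂/∂z`. -/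
noncomputable def anchor (p : ℂ → ℂ) : Fin 2 → (ℂ → ℂ) → ℂ → ℂ :=
  fun a f z => if a = 0 then p z * wirtBar1 f z else - p z * wirt1 f z

/-- Structure functions of the Koszul bracket on the coframe `(dz, dz̄)`:
`[dz, dz̄]_π = d{z,z̄} = dπ₁₁ = (∂π₁₁/∂z) dz + (∂π₁₁/∂z̄) dz̄`, with
`[dz̄,dz]_π = -[dz,dz̄]_π` and `[dz,dz]_π = [dz̄,dz̄]_π = 0`. -/
noncomputable def Cstr (p : ℂ → ℂ) : Fin 2 → Fin 2 → Fin 2 → ℂ → ℂ :=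
  fun a b c z =>
    if a = 0 ∧ b = 1 then (if c = 0 then wirt1 p z else wirtBar1 p z)
    else if a = 1 ∧ b = 0 then -(if c = 0 then wirt1 p z else wirtBar1 p z)
    else 0

lemma fderiv_mul_conj (z v : ℂ) :
    fderiv ℝ (fun w : ℂ => w * (starRingEnd ℂ) w) z v
      = v * (starRingEnd ℂ) z + z * (starRingEnd ℂ) v := by
  have h1 : HasFDerivAt (fun w : ℂ => w) (ContinuousLinearMap.id ℝ ℂ) z := hasFDerivAt_id z
  have h2 : HasFDerivAt (fun w : ℂ => (starRingEnd ℂ) w)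
      (Complex.conjCLE.toContinuousLinearMap) z := Complex.conjCLE.hasFDerivAt
  have h := (h1.mul h2).fderiv
  rw [show (fun w : ℂ => w * (starRingEnd ℂ) w) = ((fun w => w) * fun w => (starRingEnd ℂ) w) from rfl, h]
  simp [ContinuousLinearMap.smul_apply]
  ring

lemma wirt1_G (z : ℂ) : wirt1 (fun w => w * (starRingEnd ℂ) w) z = (starRingEnd ℂ) z := by
  simp [wirt1, fderiv_mul_conj]; ring_nf; simp [Complex.I_sq]; ring

lemma wirtBar1_G (z : ℂ) : wirtBar1 (fun w => w * (starRingEnd ℂ) w) z = z := by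
  simp [wirtBar1, fderiv_mul_conj]; ring_nf; simp [Complex.I_sq]; ring

lemma wirt1_zero (z : ℂ) : wirt1 (fun _ => (0:ℂ)) z = 0 := by simp [wirt1]
lemma wirtBar1_zero (z : ℂ) : wirtBar1 (fun _ => (0:ℂ)) z = 0 := by simp [wirtBar1]

lemma wirt1_neg (f : ℂ → ℂ) (z : ℂ) : wirt1 (fun w => -f w) z = - wirt1 f z := by
  simp [wirt1, fderiv_neg]; ring
lemma wirtBar1_neg (f : ℂ → ℂ) (z : ℂ) : wirtBar1 (fun w => -f w) z = - wirtBar1 f z := by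
  simp [wirtBar1, fderiv_neg]; ring

lemma wirt1_sq (p : ℂ → ℂ) (z : ℂ) (hd : DifferentiableAt ℝ p z) :
    wirt1 (fun w => (p w) ^ 2) z = 2 * p z * wirt1 p z := by
  have h : fderiv ℝ (fun w => (p w)^2) z = p z • fderiv ℝ p z + p z • fderiv ℝ p z := by
    have : (fun w => (p w)^2) = fun w => p w * p w := by funext w; ring
    rw [this, fderiv_fun_mul hd hd]
  simp [wirt1, h, ContinuousLinearMap.smul_apply]; ring

lemma wirtBar1_sq (p : ℂ → ℂ) (z : ℂ) (hd : DifferentiableAt ℝ p z) :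
    wirtBar1 (fun w => (p w) ^ 2) z = 2 * p z * wirtBar1 p z := by
  have h : fderiv ℝ (fun w => (p w)^2) z = p z • fderiv ℝ p z + p z • fderiv ℝ p z := by
    have : (fun w => (p w)^2) = fun w => p w * p w := by funext w; ring
    rw [this, fderiv_fun_mul hd hd]
  simp [wirtBar1, h, ContinuousLinearMap.smul_apply]; ring


/-- on `ℂ*` with cometric `g*(dz,dz) = g*(dz̄,dz̄) = z z̄`,
`g*(dz,dz̄) = 0` and Poisson bivector `π = π₁₁ ∂z ∧ ∂z̄` with `π₁₁` smooth and nowhere zero,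
the Levi-Civita contravariant connection `D` of `(π, g*)` — given by Christoffel symbols `Γ`
satisfying the metric and torsion-free conditions — satisfies `Dπ = 0` if and only if
`π₁₁²/z - (1/2)∂(π₁₁²)/∂z = 0` and `π₁₁²/z̄ - (1/2)∂(π₁₁²)/∂z̄ = 0`. -/
theorem contravariant_levi_civita_Dpi_zero_iff (p : ℂ → ℂ)
    (hp : ContDiffOn ℝ (⊤ : ℕ∞) p {z : ℂ | z ≠ 0})
    (hpne : ∀ z : ℂ, z ≠ 0 → p z ≠ 0)
    (Γ : Fin 2 → Fin 2 → Fin 2 → ℂ → ℂ)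
    (hmetric : ∀ a b c, ∀ z : ℂ, z ≠ 0 →
      anchor p a (fun w => Gco b c w) z
        = (∑ d : Fin 2, Γ a b d z * Gco d c z) + (∑ d : Fin 2, Γ a c d z * Gco b d z))
    (htorsionfree : ∀ a b c, ∀ z : ℂ, z ≠ 0 → Γ a b c z - Γ b a c z = Cstr p a b c z) :
    (∀ a b c, ∀ z : ℂ, z ≠ 0 →
      anchor p a (fun w => Pco p b c w) z
        - (∑ d : Fin 2, Γ a b d z * Pco p d c z)
        - (∑ d : Fin 2, Γ a c d z * Pco p b d z) = 0) ↔
    (∀ z : ℂ, z ≠ 0 →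
      (p z) ^ 2 / z - (1 / 2) * wirt1 (fun w => (p w) ^ 2) z = 0 ∧
      (p z) ^ 2 / (starRingEnd ℂ) z - (1 / 2) * wirtBar1 (fun w => (p w) ^ 2) z = 0) := by
  have hopen : IsOpen {z : ℂ | z ≠ 0} := isOpen_ne
  constructor
  · intro hD z hz
    have hdiff : DifferentiableAt ℝ p z :=
      (hp.contDiffAt (hopen.mem_nhds hz)).differentiableAt (by simp)
    have hconj : (starRingEnd ℂ) z ≠ 0 := by simpa using hz
    have hm000 := hmetric 0 0 0 z hz
    have hm011 := hmetric 0 1 1 z hz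
    have hm100 := hmetric 1 0 0 z hz
    have hm111 := hmetric 1 1 1 z hz
    have hd0 := hD 0 0 1 z hz
    have hd1 := hD 1 0 1 z hz
    simp [anchor, Gco, Pco, Fin.sum_univ_two, wirt1_G, wirtBar1_G] at hm000 hm011 hm100 hm111 hd0 hd1
    constructor
    · have key1 : (p z * wirt1 p z * z) * ((starRingEnd ℂ) z)
          = (p z ^ 2) * ((starRingEnd ℂ) z) := by
        linear_combination (-(z * (starRingEnd ℂ) z)) * hd1 + (p z / 2) * hm100 + (p z / 2) * hm111
      have key1' := mul_right_cancel₀ hconj key1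
      rw [wirt1_sq p z hdiff]
      field_simp
      linear_combination (-1 : ℂ) * key1'
    · have key2 : (p z * wirtBar1 p z * (starRingEnd ℂ) z) * z
          = (p z ^ 2) * z := by
        linear_combination (z * (starRingEnd ℂ) z) * hd0 - (p z / 2) * hm000 - (p z / 2) * hm011
      have key2' := mul_right_cancel₀ hz key2
      rw [wirtBar1_sq p z hdiff]
      field_simp
      linear_combination (-1 : ℂ) * key2'
  · intro h a b c z hz
    have hdiff : DifferentiableAt ℝ p z :=
      (hp.contDiffAt (hopen.mem_nhds hz)).differentiableAt (by simp)
    have hconj : (starRingEnd ℂ) z ≠ 0 := by simpa using hz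
    obtain ⟨h1, h2⟩ := h z hz
    rw [wirt1_sq p z hdiff] at h1
    rw [wirtBar1_sq p z hdiff] at h2
    have e1 : p z * wirt1 p z * z = p z ^ 2 := by
      field_simp at h1; linear_combination (-1 : ℂ) * h1
    have e2 : p z * wirtBar1 p z * (starRingEnd ℂ) z = p z ^ 2 := by
      field_simp at h2; linear_combination (-1 : ℂ) * h2
    have hm000 := hmetric 0 0 0 z hz
    have hm011 := hmetric 0 1 1 z hz
    have hm100 := hmetric 1 0 0 z hz
    have hm111 := hmetric 1 1 1 z hz
    simp [Gco, anchor, Fin.sum_univ_two, wirt1_G, wirtBar1_G] at hm000 hm011 hm100 hm111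
    have hG : z * (starRingEnd ℂ) z ≠ 0 := mul_ne_zero hz hconj
    fin_cases a <;> fin_cases b <;> fin_cases c <;>
      simp [anchor, Pco, Fin.sum_univ_two, wirt1_zero, wirtBar1_zero, wirt1_neg, wirtBar1_neg]
    · -- a=0 b=0 c=1
      refine mul_right_cancel₀ hG ?_
      linear_combination z * e2 + (p z / 2) * hm000 + (p z / 2) * hm011
    · -- a=0 b=1 c=0
      refine mul_right_cancel₀ hG ?_
      linear_combination (-z) * e2 - (p z / 2) * hm000 - (p z / 2) * hm011
    · -- a=1 b=0 c=1
      refine mul_right_cancel₀ hG ?_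
      linear_combination (-(starRingEnd ℂ) z) * e1 + (p z / 2) * hm100 + (p z / 2) * hm111
    · -- a=1 b=1 c=0
      refine mul_right_cancel₀ hG ?_
      linear_combination ((starRingEnd ℂ) z) * e1 - (p z / 2) * hm100 - (p z / 2) * hm111
end

section
/- Let (M, π, g*) be a Poisson manifold with cometric g* and Levi-Civita contravariant connection D. If Dπ = 0 (i.e. π_#(α)·π(β,γ) = π(D_α β, γ) + π(β, D_α γ) for all 1-forms α, β, γ), then for all 1-forms α, β and all smooth functions f: π(D_α df, β) + π(α, D_β df) = −(L_{π_#(df)} π)(α, β), where L denotes the Lie derivative along the Hamiltonian vector field π_#(df). -/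
theorem pairing_sub_eq_of_parallel {F Ω : Type*} [AddCommGroup F] [Sub Ω]
    (π : Ω → Ω → F) (ρ : Ω → F → F) (D : Ω → Ω → Ω)
    (hπskew : ∀ α β, π α β = - π β α)
    (hπsub : ∀ γ α β, π γ (α - β) = π γ α - π γ β)
    (hDπ : ∀ α β γ, ρ α (π β γ) = π (D α β) γ + π β (D α γ)) (θ α β : Ω) :
    π θ (D α β - D β α) =
      ρ α (π θ β) - ρ β (π θ α) - (π (D α θ) β + π α (D β θ)) := by
  rw [hπsub, hDπ α θ β, hDπ β θ α, hπskew α (D β θ)]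
  abel

/-- Let `(M, π, g*)` be a Poisson manifold with cometric `g*` and Levi-Civita
contravariant connection `D`. We record the relevant structure algebraically: `F` is the space
of smooth functions, `Ω` the space of 1-forms, `π : Ω → Ω → F` the Poisson bivector (skew,
additive in each argument), `ρ α = π_#(α)·` the anchor acting on functions, `d : F → Ω` the
differential, `koszul` the Koszul bracket `[·,·]_π`, and `Lπ f α β = (L_{π_#(df)} π)(α, β)`
the Lie derivative of `π` along the Hamiltonian vector field `π_#(df)`.
Hypotheses: `D` is torsion-free (`D_α β - D_β α = [α,β]_π`), `Dπ = 0`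
(`π_#(α)·π(β,γ) = π(D_α β, γ) + π(β, D_α γ)`), and the evaluation identity
`[α,β]_π(π_#(df)) = π_#(α)·β(π_#(df)) - π_#(β)·α(π_#(df)) + (L_{π_#(df)}π)(α,β)`,
where `γ(π_#(df)) = π(df, γ)`.
Conclusion: `π(D_α df, β) + π(α, D_β df) = -(L_{π_#(df)} π)(α, β)`. -/
theorem Dpi_zero_implies_lie_derivative_formula
    {F Ω : Type*} [AddCommGroup F] [AddCommGroup Ω]
    (π : Ω → Ω → F) (ρ : Ω → F → F) (d : F → Ω) (D : Ω → Ω → Ω)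
    (koszul : Ω → Ω → Ω) (Lπ : F → Ω → Ω → F)
    (hπskew : ∀ α β, π α β = - π β α)
    (hπsub : ∀ γ α β, π γ (α - β) = π γ α - π γ β)
    (htorsionfree : ∀ α β, D α β - D β α = koszul α β)
    (hDπ : ∀ α β γ, ρ α (π β γ) = π (D α β) γ + π β (D α γ))
    (hEval : ∀ (f : F) (α β : Ω),
      π (d f) (koszul α β) = ρ α (π (d f) β) - ρ β (π (d f) α) + Lπ f α β) :
    ∀ (f : F) (α β : Ω), π (D α (d f)) β + π α (D β (d f)) = - Lπ f α β := by
  intro f α β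
  have h := pairing_sub_eq_of_parallel π ρ D hπskew hπsub hDπ (d f) α β
  rw [htorsionfree, hEval] at h
  linear_combination (norm := abel) h
end
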